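/- arXiv:2508.03200 — 5 statements merged into one kernel-verified Lean document; each statement's English description precedes it below -/
import Mathlib

section
/- Under the Hess–Sretensky conditions s₃=0, x₃=0, and A₂(A₃−A₁)x₂² = A₁(A₂−A₃)x₁², the function H = A₁ω₁x₁ + A₂ω₂x₂ + A₁x₁(s₂x₁−s₁x₂)/((A₃−A₁)x₂) satisfies along solutions of the Euler–Poisson equations of a heavy gyrostat: dH/dt = (ω₃(A₃−A₁)x₂/(A₁x₁))·H. In particular, if H = 0 at the initial instant, then H ≡ 0 for all time. -/
/-!
In `x₁ · (first Euler equation) + x₂ · (second)` the torques `∓ M g x₁ x₂ γ₃` cancel because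
`x₃ = s₃ = 0`, and the Hess–Sretensky condition makes what remains equal to a multiple of `ω₃ H`.
So `H` solves the linear equation `H' = c H` with continuous coefficient `c`; multiplying by the
integrating factor `exp (-∫ c)` yields a constant, hence a solution vanishing once vanishes everywhere.
-/

theorem eq_zero_of_hasDerivAt_smul_self {E : Type*} [NormedAddCommGroup E] [NormedSpace ℝ E]
    {c : ℝ → ℝ} {f : ℝ → E} (hc : Continuous c) (hf : ∀ t, HasDerivAt f (c t • f t) t)
    {t₀ : ℝ} (h₀ : f t₀ = 0) (t : ℝ) : f t = 0 := by
  set G : ℝ → E := fun t => Real.exp (-∫ s in t₀..t, c s) • f t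
  have hG : ∀ t, HasDerivAt G 0 t := fun t => by
    have hF := (hc.integral_hasStrictDerivAt t₀ t).hasDerivAt
    refine ((hF.neg.exp).smul (hf t)).congr_deriv ?_
    rw [smul_smul, ← add_smul, mul_neg, add_neg_cancel, zero_smul]
  have hGt : G t = G t₀ :=
    is_const_of_deriv_eq_zero (fun s => (hG s).differentiableAt) (fun s => (hG s).deriv) t t₀
  simpa only [G, h₀, smul_zero, smul_eq_zero, Real.exp_ne_zero, false_or] using hGt

theorem hessSretensky_identity {A₁ A₂ A₃ x₁ x₂ x₃ s₁ s₂ s₃ M g ω₁ ω₂ ω₃ γ₁ γ₂ γ₃ ω₁' ω₂' : ℝ}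
    (hA₁ : A₁ ≠ 0) (hx₁ : x₁ ≠ 0) (hx₂ : x₂ ≠ 0) (hA₃₁ : A₃ ≠ A₁)
    (hs₃ : s₃ = 0) (hx₃ : x₃ = 0)
    (hHS : A₂ * (A₃ - A₁) * x₂ ^ 2 = A₁ * (A₂ - A₃) * x₁ ^ 2)
    (e₁ : A₁ * ω₁' + (A₃ - A₂) * ω₂ * ω₃ + s₃ * ω₂ - s₂ * ω₃ = M * g * (x₃ * γ₂ - x₂ * γ₃))
    (e₂ : A₂ * ω₂' + (A₁ - A₃) * ω₁ * ω₃ + s₁ * ω₃ - s₃ * ω₁ = M * g * (x₁ * γ₃ - x₃ * γ₁)) :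
    A₁ * ω₁' * x₁ + A₂ * ω₂' * x₂ = ω₃ * (A₃ - A₁) * x₂ / (A₁ * x₁) *
      (A₁ * ω₁ * x₁ + A₂ * ω₂ * x₂ + A₁ * x₁ * (s₂ * x₁ - s₁ * x₂) / ((A₃ - A₁) * x₂)) := by
  subst hs₃ hx₃
  have hA₃₁' : A₃ - A₁ ≠ 0 := sub_ne_zero.mpr hA₃₁
  field_simp
  linear_combination (A₁ * x₁ * x₁) * e₁ + (A₁ * x₁ * x₂) * e₂ - (ω₂ * ω₃) * hHS

theorem hess_sretensky_invariant_general
    (A₁ A₂ A₃ x₁ x₂ x₃ s₁ s₂ s₃ M g : ℝ)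
    (ω₁ ω₂ ω₃ γ₁ γ₂ γ₃ ω₁' ω₂' ω₃' : ℝ → ℝ)
    (hA₁ : A₁ ≠ 0) (hx₁ : x₁ ≠ 0) (hx₂ : x₂ ≠ 0) (hA₃₁ : A₃ ≠ A₁)
    (hs₃ : s₃ = 0) (hx₃ : x₃ = 0)
    (hHS : A₂ * (A₃ - A₁) * x₂ ^ 2 = A₁ * (A₂ - A₃) * x₁ ^ 2)
    (hω₁ : ∀ t, HasDerivAt ω₁ (ω₁' t) t)
    (hω₂ : ∀ t, HasDerivAt ω₂ (ω₂' t) t)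
    (hω₃ : ∀ t, HasDerivAt ω₃ (ω₃' t) t)
    (e₁ : ∀ t, A₁ * ω₁' t + (A₃ - A₂) * ω₂ t * ω₃ t + s₃ * ω₂ t - s₂ * ω₃ t
        = M * g * (x₃ * γ₂ t - x₂ * γ₃ t))
    (e₂ : ∀ t, A₂ * ω₂' t + (A₁ - A₃) * ω₁ t * ω₃ t + s₁ * ω₃ t - s₃ * ω₁ t
        = M * g * (x₁ * γ₃ t - x₃ * γ₁ t))
    (H : ℝ → ℝ)
    (hH : ∀ t, H t = A₁ * ω₁ t * x₁ + A₂ * ω₂ t * x₂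
        + A₁ * x₁ * (s₂ * x₁ - s₁ * x₂) / ((A₃ - A₁) * x₂)) :
    (∀ t, HasDerivAt H (ω₃ t * (A₃ - A₁) * x₂ / (A₁ * x₁) * H t) t)
    ∧ (H 0 = 0 → ∀ t, H t = 0) := by
  have hderiv : ∀ t, HasDerivAt H (ω₃ t * (A₃ - A₁) * x₂ / (A₁ * x₁) * H t) t := fun t => by
    have hd : HasDerivAt H (A₁ * ω₁' t * x₁ + A₂ * ω₂' t * x₂) t := by
      rw [funext hH]
      exact ((((hω₁ t).const_mul A₁).mul_const x₁).add
        (((hω₂ t).const_mul A₂).mul_const x₂)).add_const _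
    rwa [hH t, ← hessSretensky_identity hA₁ hx₁ hx₂ hA₃₁ hs₃ hx₃ hHS (e₁ t) (e₂ t)]
  have hω₃c : Continuous ω₃ := continuous_iff_continuousAt.mpr fun t => (hω₃ t).continuousAt
  refine ⟨hderiv, fun h₀ => eq_zero_of_hasDerivAt_smul_self
    (c := fun t => ω₃ t * (A₃ - A₁) * x₂ / (A₁ * x₁)) (by fun_prop) (fun t => ?_) h₀⟩
  simpa only [smul_eq_mul] using hderiv t

/-- Hess–Sretensky invariant relation for the heavy gyrostat. -/
theorem hess_sretensky_invariant
    (A₁ A₂ A₃ x₁ x₂ x₃ s₁ s₂ s₃ M g : ℝ)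
    (ω₁ ω₂ ω₃ γ₁ γ₂ γ₃ ω₁' ω₂' ω₃' : ℝ → ℝ)
    (hA₁ : A₁ ≠ 0) (hx₁ : x₁ ≠ 0) (hx₂ : x₂ ≠ 0) (hA₃₁ : A₃ ≠ A₁)
    (hs₃ : s₃ = 0) (hx₃ : x₃ = 0)
    (hHS : A₂ * (A₃ - A₁) * x₂ ^ 2 = A₁ * (A₂ - A₃) * x₁ ^ 2)
    (hω₁ : ∀ t, HasDerivAt ω₁ (ω₁' t) t)
    (hω₂ : ∀ t, HasDerivAt ω₂ (ω₂' t) t)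
    (hω₃ : ∀ t, HasDerivAt ω₃ (ω₃' t) t)
    (e₁ : ∀ t, A₁ * ω₁' t + (A₃ - A₂) * ω₂ t * ω₃ t + s₃ * ω₂ t - s₂ * ω₃ t
        = M * g * (x₃ * γ₂ t - x₂ * γ₃ t))
    (e₂ : ∀ t, A₂ * ω₂' t + (A₁ - A₃) * ω₁ t * ω₃ t + s₁ * ω₃ t - s₃ * ω₁ t
        = M * g * (x₁ * γ₃ t - x₃ * γ₁ t))
    (e₃ : ∀ t, A₃ * ω₃' t + (A₂ - A₁) * ω₁ t * ω₂ t + s₂ * ω₁ t - s₁ * ω₂ t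
        = M * g * (x₂ * γ₁ t - x₁ * γ₂ t))
    (hγ₁ : ∀ t, HasDerivAt γ₁ (ω₃ t * γ₂ t - ω₂ t * γ₃ t) t)
    (hγ₂ : ∀ t, HasDerivAt γ₂ (ω₁ t * γ₃ t - ω₃ t * γ₁ t) t)
    (hγ₃ : ∀ t, HasDerivAt γ₃ (ω₂ t * γ₁ t - ω₁ t * γ₂ t) t)
    (H : ℝ → ℝ)
    (hH : ∀ t, H t = A₁ * ω₁ t * x₁ + A₂ * ω₂ t * x₂
        + A₁ * x₁ * (s₂ * x₁ - s₁ * x₂) / ((A₃ - A₁) * x₂)) :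
    (∀ t, HasDerivAt H (ω₃ t * (A₃ - A₁) * x₂ / (A₁ * x₁) * H t) t)
    ∧ (H 0 = 0 → ∀ t, H t = 0) :=
  hess_sretensky_invariant_general A₁ A₂ A₃ x₁ x₂ x₃ s₁ s₂ s₃ M g ω₁ ω₂ ω₃ γ₁ γ₂ γ₃ ω₁' ω₂' ω₃' hA₁
    hx₁ hx₂ hA₃₁ hs₃ hx₃ hHS hω₁ hω₂ hω₃ e₁ e₂ H hH
end

section
/- In the Yehia–Komarov case A₁ = A₂ = 2A₃, x₂ = x₃ = 0, s₁ = s₂ = 0, the function J = (ω₁²−ω₂²−(Mgx₁/A₃)γ₁)² + (2ω₁ω₂−(Mgx₁/A₃)γ₂)² + (2s₃/A₃)(ω₃−s₃/A₃)(ω₁²+ω₂²) − (4Mgx₁s₃/A₃²)γ₃ω₁ is a first integral of the Euler–Poisson equations of a heavy gyrostat. -/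
/-!
Write `c = M g x₁ / A₃` and `σ = s₃ / A₃`. Dividing the Euler equations by `A₃` gives
`2 ω₁' = (ω₃ - σ) ω₂`, `2 ω₂' = c γ₃ - (ω₃ - σ) ω₁`, `ω₃' = -c γ₂`.
For `P + i Q = (ω₁ + i ω₂)² - c (γ₁ + i γ₂)` this yields
`(P + i Q)' = -i (ω₃ - σ) (P + i Q) + i σ c (γ₁ + i γ₂)`, so the rotation term drops out of
`(P² + Q²)' = 2 σ c (Q γ₁ - P γ₂)`, and the remaining two (gyrostatic) terms of the integral
have exactly the opposite derivative.
-/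

/-- The Euler–Poisson equations at time `t` in the case `A₁ = A₂ = 2 A₃`, `x₂ = x₃ = 0`,
`s₁ = s₂ = 0`, divided by `A₃`. -/
structure YehiaKomarovSystemAt (c σ : ℝ) (ω₁ ω₂ ω₃ γ₁ γ₂ γ₃ : ℝ → ℝ) (t : ℝ) : Prop where
  hasDerivAt_ω₁ : HasDerivAt ω₁ ((ω₃ t - σ) * ω₂ t / 2) t
  hasDerivAt_ω₂ : HasDerivAt ω₂ ((c * γ₃ t - (ω₃ t - σ) * ω₁ t) / 2) t
  hasDerivAt_ω₃ : HasDerivAt ω₃ (-(c * γ₂ t)) t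
  hasDerivAt_γ₁ : HasDerivAt γ₁ (ω₃ t * γ₂ t - ω₂ t * γ₃ t) t
  hasDerivAt_γ₂ : HasDerivAt γ₂ (ω₁ t * γ₃ t - ω₃ t * γ₁ t) t
  hasDerivAt_γ₃ : HasDerivAt γ₃ (ω₂ t * γ₁ t - ω₁ t * γ₂ t) t

def yehiaKomarovIntegral (c σ ω₁ ω₂ ω₃ γ₁ γ₂ γ₃ : ℝ) : ℝ :=
  (ω₁ ^ 2 - ω₂ ^ 2 - c * γ₁) ^ 2 + (2 * ω₁ * ω₂ - c * γ₂) ^ 2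
    + 2 * σ * (ω₃ - σ) * (ω₁ ^ 2 + ω₂ ^ 2) - 4 * c * σ * γ₃ * ω₁

namespace YehiaKomarovSystemAt

variable {c σ t : ℝ} {ω₁ ω₂ ω₃ γ₁ γ₂ γ₃ : ℝ → ℝ}

theorem hasDerivAt_re (h : YehiaKomarovSystemAt c σ ω₁ ω₂ ω₃ γ₁ γ₂ γ₃ t) :
    HasDerivAt (fun t ↦ ω₁ t ^ 2 - ω₂ t ^ 2 - c * γ₁ t)
      ((ω₃ t - σ) * (2 * ω₁ t * ω₂ t - c * γ₂ t) - σ * c * γ₂ t) t :=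
  (((h.hasDerivAt_ω₁.pow 2).sub (h.hasDerivAt_ω₂.pow 2)).sub
    (h.hasDerivAt_γ₁.const_mul c)).congr_deriv (by ring)

theorem hasDerivAt_im (h : YehiaKomarovSystemAt c σ ω₁ ω₂ ω₃ γ₁ γ₂ γ₃ t) :
    HasDerivAt (fun t ↦ 2 * ω₁ t * ω₂ t - c * γ₂ t)
      (-(ω₃ t - σ) * (ω₁ t ^ 2 - ω₂ t ^ 2 - c * γ₁ t) + σ * c * γ₁ t) t :=
  (((h.hasDerivAt_ω₁.const_mul 2).mul h.hasDerivAt_ω₂).sub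
    (h.hasDerivAt_γ₂.const_mul c)).congr_deriv (by ring)

theorem hasDerivAt_normSq (h : YehiaKomarovSystemAt c σ ω₁ ω₂ ω₃ γ₁ γ₂ γ₃ t) :
    HasDerivAt (fun t ↦ (ω₁ t ^ 2 - ω₂ t ^ 2 - c * γ₁ t) ^ 2 + (2 * ω₁ t * ω₂ t - c * γ₂ t) ^ 2)
      (2 * σ * c * (2 * ω₁ t * ω₂ t * γ₁ t - (ω₁ t ^ 2 - ω₂ t ^ 2) * γ₂ t)) t :=
  ((h.hasDerivAt_re.pow 2).add (h.hasDerivAt_im.pow 2)).congr_deriv (by ring)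

theorem hasDerivAt_gyrostatic (h : YehiaKomarovSystemAt c σ ω₁ ω₂ ω₃ γ₁ γ₂ γ₃ t) :
    HasDerivAt (fun t ↦ 2 * σ * (ω₃ t - σ) * (ω₁ t ^ 2 + ω₂ t ^ 2) - 4 * c * σ * γ₃ t * ω₁ t)
      (-(2 * σ * c * (2 * ω₁ t * ω₂ t * γ₁ t - (ω₁ t ^ 2 - ω₂ t ^ 2) * γ₂ t))) t := by
  have hω := (h.hasDerivAt_ω₁.pow 2).add (h.hasDerivAt_ω₂.pow 2)
  exact ((((h.hasDerivAt_ω₃.sub_const σ).const_mul (2 * σ)).mul hω).sub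
    ((h.hasDerivAt_γ₃.const_mul (4 * c * σ)).mul h.hasDerivAt_ω₁)).congr_deriv (by
      simp only [Pi.add_apply, Pi.pow_apply]; ring)

theorem hasDerivAt_yehiaKomarovIntegral (h : YehiaKomarovSystemAt c σ ω₁ ω₂ ω₃ γ₁ γ₂ γ₃ t) :
    HasDerivAt (fun t ↦ yehiaKomarovIntegral c σ (ω₁ t) (ω₂ t) (ω₃ t) (γ₁ t) (γ₂ t) (γ₃ t))
      0 t := by
  have := h.hasDerivAt_normSq.add h.hasDerivAt_gyrostatic
  unfold yehiaKomarovIntegral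
  exact (this.congr_deriv (by ring)).congr_of_eventuallyEq
    (.of_forall fun _ ↦ by simp only [Pi.add_apply]; ring)

end YehiaKomarovSystemAt

/-- The Yehia–Komarov first integral of the heavy gyrostat. -/
theorem yehia_komarov_first_integral
    (A₁ A₂ A₃ x₁ x₂ x₃ s₁ s₂ s₃ M g : ℝ)
    (hA₁ : A₁ = 2 * A₃) (hA₂ : A₂ = 2 * A₃)
    (hx₂ : x₂ = 0) (hx₃ : x₃ = 0) (hs₁ : s₁ = 0) (hs₂ : s₂ = 0)
    (hA₃ : A₃ ≠ 0)
    (ω₁ ω₂ ω₃ γ₁ γ₂ γ₃ ω₁' ω₂' ω₃' : ℝ → ℝ)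
    (hω₁ : ∀ t, HasDerivAt ω₁ (ω₁' t) t)
    (hω₂ : ∀ t, HasDerivAt ω₂ (ω₂' t) t)
    (hω₃ : ∀ t, HasDerivAt ω₃ (ω₃' t) t)
    (e₁ : ∀ t, A₁ * ω₁' t + (A₃ - A₂) * ω₂ t * ω₃ t + s₃ * ω₂ t - s₂ * ω₃ t
        = M * g * (x₃ * γ₂ t - x₂ * γ₃ t))
    (e₂ : ∀ t, A₂ * ω₂' t + (A₁ - A₃) * ω₁ t * ω₃ t + s₁ * ω₃ t - s₃ * ω₁ t
        = M * g * (x₁ * γ₃ t - x₃ * γ₁ t))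
    (e₃ : ∀ t, A₃ * ω₃' t + (A₂ - A₁) * ω₁ t * ω₂ t + s₂ * ω₁ t - s₁ * ω₂ t
        = M * g * (x₂ * γ₁ t - x₁ * γ₂ t))
    (hγ₁ : ∀ t, HasDerivAt γ₁ (ω₃ t * γ₂ t - ω₂ t * γ₃ t) t)
    (hγ₂ : ∀ t, HasDerivAt γ₂ (ω₁ t * γ₃ t - ω₃ t * γ₁ t) t)
    (hγ₃ : ∀ t, HasDerivAt γ₃ (ω₂ t * γ₁ t - ω₁ t * γ₂ t) t) :
    ∀ t, HasDerivAt (fun t =>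
      (ω₁ t ^ 2 - ω₂ t ^ 2 - (M * g * x₁ / A₃) * γ₁ t) ^ 2
      + (2 * ω₁ t * ω₂ t - (M * g * x₁ / A₃) * γ₂ t) ^ 2
      + (2 * s₃ / A₃) * (ω₃ t - s₃ / A₃) * (ω₁ t ^ 2 + ω₂ t ^ 2)
      - (4 * M * g * x₁ * s₃ / A₃ ^ 2) * γ₃ t * ω₁ t) 0 t := by
  subst hA₁ hA₂ hx₂ hx₃ hs₁ hs₂
  intro t
  have hsys : YehiaKomarovSystemAt (M * g * x₁ / A₃) (s₃ / A₃) ω₁ ω₂ ω₃ γ₁ γ₂ γ₃ t := by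
    refine ⟨(hω₁ t).congr_deriv ?_, (hω₂ t).congr_deriv ?_, (hω₃ t).congr_deriv ?_,
      hγ₁ t, hγ₂ t, hγ₃ t⟩
    · have := e₁ t; field_simp; linarith
    · have := e₂ t; field_simp; linarith
    · have := e₃ t; field_simp; linarith
  refine hsys.hasDerivAt_yehiaKomarovIntegral.congr_of_eventuallyEq (.of_forall fun _ ↦ ?_)
  unfold yehiaKomarovIntegral
  field_simp
end

section
/- Under the Kosov conditions A₂(A₃−A₁)x₂² = A₁(A₂−A₃)x₁², x₃ = 0, s₃ = 0, with gyroscopic matrix entries g₁₁ = λx₁², g₁₂ = λx₁x₂, g₂₂ = λx₂², the function H = A₁ω₁x₁ + A₂ω₂x₂ + A₁x₁(s₂x₁−s₁x₂)/((A₃−A₁)x₂) satisfies along solutions of the gyrostat equations with gyroscopic forces: dH/dt = (ω₃(A₂−A₃)x₁/(A₂x₂))·H; in particular H = 0 is an invariant manifold. -/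
/-!
Multiplying the first Euler equation by `x₁` and the second by `x₂` and adding, the gravity and
gyroscopic torques cancel (both are proportional to the vector `(x₂, -x₁)`), leaving
`d/dt (A₁ ω₁ x₁ + A₂ ω₂ x₂) = ω₃ ((A₂ - A₃) x₁ ω₂ + (A₃ - A₁) x₂ ω₁ + s₂ x₁ - s₁ x₂)`.
The Kosov condition makes the bracket proportional to `H`, so `H` satisfies a linear equation
`H' = a(t) H`, whence `H(t) = H(0) exp ∫₀ᵗ a`.
-/

open intervalIntegral

theorem eq_mul_exp_integral_of_hasDerivAt {f a : ℝ → ℝ} (ha : Continuous a)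
    (hf : ∀ t, HasDerivAt f (a t * f t) t) (t : ℝ) :
    f t = f 0 * Real.exp (∫ s in (0 : ℝ)..t, a s) := by
  set I : ℝ → ℝ := fun t => ∫ s in (0 : ℝ)..t, a s
  have hI : ∀ t, HasDerivAt I (a t) t := fun t => ha.integral_hasStrictDerivAt 0 t |>.hasDerivAt
  have hG : ∀ t, HasDerivAt (fun t => f t * Real.exp (-I t)) 0 t := by
    intro t
    have h : HasDerivAt (fun t => f t * Real.exp (-I t))
        (a t * f t * Real.exp (-I t) + f t * (Real.exp (-I t) * -a t)) t :=
      (hf t).mul (hI t).neg.exp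
    rwa [show a t * f t * Real.exp (-I t) + f t * (Real.exp (-I t) * -a t) = 0 by ring] at h
  have hconst := is_const_of_deriv_eq_zero (fun t => (hG t).differentiableAt)
    (fun t => (hG t).deriv) t 0
  simp only [I, integral_same, neg_zero, Real.exp_zero, mul_one] at hconst
  rw [← hconst, mul_assoc, ← Real.exp_add, neg_add_cancel, Real.exp_zero, mul_one]

theorem eq_zero_of_hasDerivAt_mul_self {f a : ℝ → ℝ} (ha : Continuous a)
    (hf : ∀ t, HasDerivAt f (a t * f t) t) (h0 : f 0 = 0) (t : ℝ) : f t = 0 := by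
  rw [eq_mul_exp_integral_of_hasDerivAt ha hf t, h0, zero_mul]

section Gyrostat

variable {A₁ A₂ A₃ x₁ x₂ s₁ s₂ : ℝ}

theorem kosov_A₂_ne_zero (hA : A₂ > A₃ ∧ A₃ > A₁) (hx₁ : x₁ ≠ 0)
    (hHS : A₂ * (A₃ - A₁) * x₂ ^ 2 = A₁ * (A₂ - A₃) * x₁ ^ 2) : A₂ ≠ 0 := by
  rintro rfl
  have hA₁A₃ : 0 < A₁ * A₃ := mul_pos_of_neg_of_neg (by linarith) (by linarith)
  have : 0 < A₁ * A₃ * x₁ ^ 2 := by positivity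
  linarith

theorem euler_projection_eq {M g lam ω₁ ω₂ ω₃ ω₁' ω₂' γ₁ γ₂ γ₃ : ℝ}
    (e₁ : A₁ * ω₁' + (A₃ - A₂) * ω₂ * ω₃ - s₂ * ω₃
        = -(M * g * x₂ * γ₃) + lam * x₂ * ω₃ * (γ₁ * x₁ + γ₂ * x₂))
    (e₂ : A₂ * ω₂' + (A₁ - A₃) * ω₁ * ω₃ + s₁ * ω₃
        = M * g * x₁ * γ₃ - lam * x₁ * ω₃ * (γ₁ * x₁ + γ₂ * x₂)) :
    A₁ * ω₁' * x₁ + A₂ * ω₂' * x₂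
      = ω₃ * ((A₂ - A₃) * x₁ * ω₂ + (A₃ - A₁) * x₂ * ω₁ + s₂ * x₁ - s₁ * x₂) := by
  linear_combination x₁ * e₁ + x₂ * e₂

theorem kosov_bracket_eq (ω₁ ω₂ : ℝ) (hA₂ : A₂ ≠ 0) (hA₃₁ : A₃ - A₁ ≠ 0) (hx₂ : x₂ ≠ 0)
    (hHS : A₂ * (A₃ - A₁) * x₂ ^ 2 = A₁ * (A₂ - A₃) * x₁ ^ 2) :
    (A₂ - A₃) * x₁ * ω₂ + (A₃ - A₁) * x₂ * ω₁ + s₂ * x₁ - s₁ * x₂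
      = (A₂ - A₃) * x₁ / (A₂ * x₂)
        * (A₁ * ω₁ * x₁ + A₂ * ω₂ * x₂ + A₁ * x₁ * (s₂ * x₁ - s₁ * x₂) / ((A₃ - A₁) * x₂)) := by
  field_simp
  linear_combination ((A₃ - A₁) * x₂ * ω₁ + x₁ * s₂ - x₂ * s₁) * hHS

end Gyrostat

theorem hess_sretensky_gyroscopic_invariant_general
    (A₁ A₂ A₃ x₁ x₂ s₁ s₂ M g lam : ℝ)
    (hA : A₂ > A₃ ∧ A₃ > A₁) (hx₁ : x₁ ≠ 0) (hx₂ : x₂ ≠ 0)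
    (hHS : A₂ * (A₃ - A₁) * x₂ ^ 2 = A₁ * (A₂ - A₃) * x₁ ^ 2)
    (ω₁ ω₂ ω₃ γ₁ γ₂ γ₃ ω₁' ω₂' ω₃' : ℝ → ℝ)
    (hω₁ : ∀ t, HasDerivAt ω₁ (ω₁' t) t)
    (hω₂ : ∀ t, HasDerivAt ω₂ (ω₂' t) t)
    (hω₃ : ∀ t, HasDerivAt ω₃ (ω₃' t) t)
    (e₁ : ∀ t, A₁ * ω₁' t + (A₃ - A₂) * ω₂ t * ω₃ t - s₂ * ω₃ t
        = -(M * g * x₂ * γ₃ t) + lam * x₂ * ω₃ t * (γ₁ t * x₁ + γ₂ t * x₂))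
    (e₂ : ∀ t, A₂ * ω₂' t + (A₁ - A₃) * ω₁ t * ω₃ t + s₁ * ω₃ t
        = M * g * x₁ * γ₃ t - lam * x₁ * ω₃ t * (γ₁ t * x₁ + γ₂ t * x₂))
    (H : ℝ → ℝ)
    (hH : ∀ t, H t = A₁ * ω₁ t * x₁ + A₂ * ω₂ t * x₂
        + A₁ * x₁ * (s₂ * x₁ - s₁ * x₂) / ((A₃ - A₁) * x₂)) :
    (∀ t, HasDerivAt H (ω₃ t * (A₂ - A₃) * x₁ / (A₂ * x₂) * H t) t)
    ∧ (H 0 = 0 → ∀ t, H t = 0) := by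
  have hA₂ : A₂ ≠ 0 := kosov_A₂_ne_zero hA hx₁ hHS
  have hA₃₁ : A₃ - A₁ ≠ 0 := sub_ne_zero.2 hA.2.ne'
  have hder : ∀ t, HasDerivAt H (ω₃ t * (A₂ - A₃) * x₁ / (A₂ * x₂) * H t) t := by
    intro t
    have hH' : HasDerivAt H (A₁ * ω₁' t * x₁ + A₂ * ω₂' t * x₂) t := by
      rw [funext hH]
      exact ((((hω₁ t).const_mul A₁).mul_const x₁).add
        (((hω₂ t).const_mul A₂).mul_const x₂)).add_const _
    rwa [euler_projection_eq (e₁ t) (e₂ t), kosov_bracket_eq _ _ hA₂ hA₃₁ hx₂ hHS, ← hH t,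
      ← mul_assoc, mul_div_assoc', ← mul_assoc] at hH'
  have hcont : Continuous fun t => ω₃ t * (A₂ - A₃) * x₁ / (A₂ * x₂) := by
    have : Continuous ω₃ := continuous_iff_continuousAt.2 fun t => (hω₃ t).continuousAt
    fun_prop
  exact ⟨hder, eq_zero_of_hasDerivAt_mul_self hcont hder⟩

/-- Hess–Sretensky invariant relation for a gyrostat with gyroscopic forces
(Kosov conditions). -/
theorem hess_sretensky_gyroscopic_invariant
    (A₁ A₂ A₃ x₁ x₂ x₃ s₁ s₂ s₃ M g lam g₁₁ g₁₂ g₂₂ : ℝ)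
    (hA : A₂ > A₃ ∧ A₃ > A₁) (hx₁ : x₁ ≠ 0) (hx₂ : x₂ ≠ 0)
    (hs₃ : s₃ = 0) (hx₃ : x₃ = 0)
    (hHS : A₂ * (A₃ - A₁) * x₂ ^ 2 = A₁ * (A₂ - A₃) * x₁ ^ 2)
    (hg₁₁ : g₁₁ = lam * x₁ ^ 2) (hg₁₂ : g₁₂ = lam * x₁ * x₂) (hg₂₂ : g₂₂ = lam * x₂ ^ 2)
    (ω₁ ω₂ ω₃ γ₁ γ₂ γ₃ ω₁' ω₂' ω₃' : ℝ → ℝ)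
    (hω₁ : ∀ t, HasDerivAt ω₁ (ω₁' t) t)
    (hω₂ : ∀ t, HasDerivAt ω₂ (ω₂' t) t)
    (hω₃ : ∀ t, HasDerivAt ω₃ (ω₃' t) t)
    (e₁ : ∀ t, A₁ * ω₁' t + (A₃ - A₂) * ω₂ t * ω₃ t - s₂ * ω₃ t
        = -(M * g * x₂ * γ₃ t) + lam * x₂ * ω₃ t * (γ₁ t * x₁ + γ₂ t * x₂))
    (e₂ : ∀ t, A₂ * ω₂' t + (A₁ - A₃) * ω₁ t * ω₃ t + s₁ * ω₃ t
        = M * g * x₁ * γ₃ t - lam * x₁ * ω₃ t * (γ₁ t * x₁ + γ₂ t * x₂))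
    (e₃ : ∀ t, A₃ * ω₃' t + (A₂ - A₁) * ω₁ t * ω₂ t + s₂ * ω₁ t - s₁ * ω₂ t
        = M * g * (x₂ * γ₁ t - x₁ * γ₂ t)
          + lam * (x₁ * ω₂ t - x₂ * ω₁ t) * (γ₁ t * x₁ + γ₂ t * x₂))
    (hγ₁ : ∀ t, HasDerivAt γ₁ (ω₃ t * γ₂ t - ω₂ t * γ₃ t) t)
    (hγ₂ : ∀ t, HasDerivAt γ₂ (ω₁ t * γ₃ t - ω₃ t * γ₁ t) t)
    (hγ₃ : ∀ t, HasDerivAt γ₃ (ω₂ t * γ₁ t - ω₁ t * γ₂ t) t)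
    (H : ℝ → ℝ)
    (hH : ∀ t, H t = A₁ * ω₁ t * x₁ + A₂ * ω₂ t * x₂
        + A₁ * x₁ * (s₂ * x₁ - s₁ * x₂) / ((A₃ - A₁) * x₂)) :
    (∀ t, HasDerivAt H (ω₃ t * (A₂ - A₃) * x₁ / (A₂ * x₂) * H t) t)
    ∧ (H 0 = 0 → ∀ t, H t = 0) :=
  hess_sretensky_gyroscopic_invariant_general A₁ A₂ A₃ x₁ x₂ s₁ s₂ M g lam hA hx₁ hx₂ hHS ω₁ ω₂ ω₃
    γ₁ γ₂ γ₃ ω₁' ω₂' ω₃' hω₁ hω₂ hω₃ e₁ e₂ H hH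
end

section
/- For the gyrostat with gyroscopic forces satisfying g₁₁ = λx₁², g₁₂ = λx₁x₂, g₂₂ = λx₂², x₃ = 0, s₃ = 0, the function K = (A₁ω₁+s₁)γ₁ + (A₂ω₂+s₂)γ₂ + A₃ω₃γ₃ + (λ/2)(x₁γ₁+x₂γ₂)² is a first integral of the equations of motion. -/
/-!
Take the scalar product of the Euler equations with `γ`. The gravitational torque
`Mg (x × γ)` is orthogonal to `γ`, and the gyrostatic terms `ω × (Aω + s)` combine with
`(Aω + s) · γ̇ = (Aω + s) · (γ × ω)` to a vanishing triple product. The gyroscopic torque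
`λ (x · γ) (x × ω)` (recall `x₃ = 0`) contributes `λ (x · γ) (x · (γ × ω)) = λ (x · γ) (x · γ̇)`,
which is exactly the derivative of `(λ/2) (x · γ)²`.
-/

theorem hasDerivAt_gyrostat_area (A₁ A₂ A₃ s₁ s₂ x₁ x₂ lam : ℝ)
    {ω₁ ω₂ ω₃ γ₁ γ₂ γ₃ : ℝ → ℝ} {t ω₁' ω₂' ω₃' γ₁' γ₂' γ₃' : ℝ}
    (hω₁ : HasDerivAt ω₁ ω₁' t) (hω₂ : HasDerivAt ω₂ ω₂' t) (hω₃ : HasDerivAt ω₃ ω₃' t)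
    (hγ₁ : HasDerivAt γ₁ γ₁' t) (hγ₂ : HasDerivAt γ₂ γ₂' t) (hγ₃ : HasDerivAt γ₃ γ₃' t) :
    HasDerivAt (fun t =>
      (A₁ * ω₁ t + s₁) * γ₁ t + (A₂ * ω₂ t + s₂) * γ₂ t + A₃ * ω₃ t * γ₃ t
      + lam / 2 * (x₁ * γ₁ t + x₂ * γ₂ t) ^ 2)
      (A₁ * ω₁' * γ₁ t + (A₁ * ω₁ t + s₁) * γ₁' + (A₂ * ω₂' * γ₂ t + (A₂ * ω₂ t + s₂) * γ₂')
        + (A₃ * ω₃' * γ₃ t + A₃ * ω₃ t * γ₃')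
        + lam * (x₁ * γ₁ t + x₂ * γ₂ t) * (x₁ * γ₁' + x₂ * γ₂')) t := by
  have hK := (((((hω₁.const_mul A₁).add_const s₁).mul hγ₁).add
    (((hω₂.const_mul A₂).add_const s₂).mul hγ₂)).add ((hω₃.const_mul A₃).mul hγ₃)).add
    ((((hγ₁.const_mul x₁).add (hγ₂.const_mul x₂)).pow 2).const_mul (lam / 2))
  refine hK.congr_deriv ?_
  simp only [Pi.add_apply]
  ring

theorem area_first_integral_gyroscopic_general
    (A₁ A₂ A₃ x₁ x₂ s₁ s₂ M g lam : ℝ)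
    (ω₁ ω₂ ω₃ γ₁ γ₂ γ₃ ω₁' ω₂' ω₃' : ℝ → ℝ)
    (hω₁ : ∀ t, HasDerivAt ω₁ (ω₁' t) t)
    (hω₂ : ∀ t, HasDerivAt ω₂ (ω₂' t) t)
    (hω₃ : ∀ t, HasDerivAt ω₃ (ω₃' t) t)
    (e₁ : ∀ t, A₁ * ω₁' t + (A₃ - A₂) * ω₂ t * ω₃ t - s₂ * ω₃ t
        = -(M * g * x₂ * γ₃ t) + lam * x₂ * ω₃ t * (γ₁ t * x₁ + γ₂ t * x₂))
    (e₂ : ∀ t, A₂ * ω₂' t + (A₁ - A₃) * ω₁ t * ω₃ t + s₁ * ω₃ t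
        = M * g * x₁ * γ₃ t - lam * x₁ * ω₃ t * (γ₁ t * x₁ + γ₂ t * x₂))
    (e₃ : ∀ t, A₃ * ω₃' t + (A₂ - A₁) * ω₁ t * ω₂ t + s₂ * ω₁ t - s₁ * ω₂ t
        = M * g * (x₂ * γ₁ t - x₁ * γ₂ t)
          + lam * (x₁ * ω₂ t - x₂ * ω₁ t) * (γ₁ t * x₁ + γ₂ t * x₂))
    (hγ₁ : ∀ t, HasDerivAt γ₁ (ω₃ t * γ₂ t - ω₂ t * γ₃ t) t)
    (hγ₂ : ∀ t, HasDerivAt γ₂ (ω₁ t * γ₃ t - ω₃ t * γ₁ t) t)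
    (hγ₃ : ∀ t, HasDerivAt γ₃ (ω₂ t * γ₁ t - ω₁ t * γ₂ t) t) :
    ∀ t, HasDerivAt (fun t =>
      (A₁ * ω₁ t + s₁) * γ₁ t + (A₂ * ω₂ t + s₂) * γ₂ t + A₃ * ω₃ t * γ₃ t
      + lam / 2 * (x₁ * γ₁ t + x₂ * γ₂ t) ^ 2) 0 t := by
  intro t
  refine (hasDerivAt_gyrostat_area A₁ A₂ A₃ s₁ s₂ x₁ x₂ lam (hω₁ t) (hω₂ t) (hω₃ t)
    (hγ₁ t) (hγ₂ t) (hγ₃ t)).congr_deriv ?_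
  linear_combination γ₁ t * e₁ t + γ₂ t * e₂ t + γ₃ t * e₃ t

/-- The modified area function is a first integral of the gyrostat equations
with gyroscopic forces. -/
theorem area_first_integral_gyroscopic
    (A₁ A₂ A₃ x₁ x₂ x₃ s₁ s₂ s₃ M g lam g₁₁ g₁₂ g₂₂ : ℝ)
    (hs₃ : s₃ = 0) (hx₃ : x₃ = 0)
    (hg₁₁ : g₁₁ = lam * x₁ ^ 2) (hg₁₂ : g₁₂ = lam * x₁ * x₂) (hg₂₂ : g₂₂ = lam * x₂ ^ 2)
    (ω₁ ω₂ ω₃ γ₁ γ₂ γ₃ ω₁' ω₂' ω₃' : ℝ → ℝ)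
    (hω₁ : ∀ t, HasDerivAt ω₁ (ω₁' t) t)
    (hω₂ : ∀ t, HasDerivAt ω₂ (ω₂' t) t)
    (hω₃ : ∀ t, HasDerivAt ω₃ (ω₃' t) t)
    (e₁ : ∀ t, A₁ * ω₁' t + (A₃ - A₂) * ω₂ t * ω₃ t - s₂ * ω₃ t
        = -(M * g * x₂ * γ₃ t) + lam * x₂ * ω₃ t * (γ₁ t * x₁ + γ₂ t * x₂))
    (e₂ : ∀ t, A₂ * ω₂' t + (A₁ - A₃) * ω₁ t * ω₃ t + s₁ * ω₃ t
        = M * g * x₁ * γ₃ t - lam * x₁ * ω₃ t * (γ₁ t * x₁ + γ₂ t * x₂))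
    (e₃ : ∀ t, A₃ * ω₃' t + (A₂ - A₁) * ω₁ t * ω₂ t + s₂ * ω₁ t - s₁ * ω₂ t
        = M * g * (x₂ * γ₁ t - x₁ * γ₂ t)
          + lam * (x₁ * ω₂ t - x₂ * ω₁ t) * (γ₁ t * x₁ + γ₂ t * x₂))
    (hγ₁ : ∀ t, HasDerivAt γ₁ (ω₃ t * γ₂ t - ω₂ t * γ₃ t) t)
    (hγ₂ : ∀ t, HasDerivAt γ₂ (ω₁ t * γ₃ t - ω₃ t * γ₁ t) t)
    (hγ₃ : ∀ t, HasDerivAt γ₃ (ω₂ t * γ₁ t - ω₁ t * γ₂ t) t) :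
    ∀ t, HasDerivAt (fun t =>
      (A₁ * ω₁ t + s₁) * γ₁ t + (A₂ * ω₂ t + s₂) * γ₂ t + A₃ * ω₃ t * γ₃ t
      + lam / 2 * (x₁ * γ₁ t + x₂ * γ₂ t) ^ 2) 0 t :=
  area_first_integral_gyroscopic_general A₁ A₂ A₃ x₁ x₂ s₁ s₂ M g lam ω₁ ω₂ ω₃ γ₁ γ₂ γ₃ ω₁' ω₂' ω₃'
    hω₁ hω₂ hω₃ e₁ e₂ e₃ hγ₁ hγ₂ hγ₃
end

section
/- For the dimensionless system with gyroscopic term dy/dτ = d₁yz + (A−B)z − Qν₁z + ν₃, dz/dτ = −d₁y² − (A−B)y + Qν₁y − ν₂, dν₁/dτ = zν₂ − yν₃, dν₂/dτ = d₁yν₃ − zν₁ + Aν₃, dν₃/dτ = −d₁yν₂ + yν₁ − Aν₂, each of H₁ = (y²+z²)/2 + ν₁, H₂ = yν₂ + zν₃ + Bν₁ + (Q/2)ν₁², H₃ = ν₁² + ν₂² + ν₃² is constant along solutions. -/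
theorem is_const_of_hasDerivAt_zero {𝕜 G : Type*} [RCLike 𝕜] [NormedAddCommGroup G]
    [NormedSpace 𝕜 G] {f : 𝕜 → G} (hf : ∀ x, HasDerivAt f 0 x) (x y : 𝕜) : f x = f y :=
  is_const_of_deriv_eq_zero (fun x => (hf x).differentiableAt) (fun x => (hf x).deriv) x y

section GyroscopicIntegrals

variable {d₁ A B Q : ℝ} {y z ν₁ ν₂ ν₃ : ℝ → ℝ}

theorem gyroscopic_energy_integral
    (hy : ∀ τ, HasDerivAt y (d₁ * y τ * z τ + (A - B) * z τ - Q * ν₁ τ * z τ + ν₃ τ) τ)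
    (hz : ∀ τ, HasDerivAt z (-(d₁ * y τ ^ 2) - (A - B) * y τ + Q * ν₁ τ * y τ - ν₂ τ) τ)
    (h1 : ∀ τ, HasDerivAt ν₁ (z τ * ν₂ τ - y τ * ν₃ τ) τ) (τ σ : ℝ) :
    (y τ ^ 2 + z τ ^ 2) / 2 + ν₁ τ = (y σ ^ 2 + z σ ^ 2) / 2 + ν₁ σ :=
  is_const_of_hasDerivAt_zero (f := fun t => (y t ^ 2 + z t ^ 2) / 2 + ν₁ t)
    (fun t => (((((hy t).pow 2).add ((hz t).pow 2)).div_const 2).add (h1 t)).congr_deriv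
      (by ring)) τ σ

theorem gyroscopic_area_integral
    (hy : ∀ τ, HasDerivAt y (d₁ * y τ * z τ + (A - B) * z τ - Q * ν₁ τ * z τ + ν₃ τ) τ)
    (hz : ∀ τ, HasDerivAt z (-(d₁ * y τ ^ 2) - (A - B) * y τ + Q * ν₁ τ * y τ - ν₂ τ) τ)
    (h1 : ∀ τ, HasDerivAt ν₁ (z τ * ν₂ τ - y τ * ν₃ τ) τ)
    (h2 : ∀ τ, HasDerivAt ν₂ (d₁ * y τ * ν₃ τ - z τ * ν₁ τ + A * ν₃ τ) τ)
    (h3 : ∀ τ, HasDerivAt ν₃ (-(d₁ * y τ * ν₂ τ) + y τ * ν₁ τ - A * ν₂ τ) τ) (τ σ : ℝ) :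
    y τ * ν₂ τ + z τ * ν₃ τ + B * ν₁ τ + Q / 2 * ν₁ τ ^ 2
      = y σ * ν₂ σ + z σ * ν₃ σ + B * ν₁ σ + Q / 2 * ν₁ σ ^ 2 :=
  is_const_of_hasDerivAt_zero
    (f := fun t => y t * ν₂ t + z t * ν₃ t + B * ν₁ t + Q / 2 * ν₁ t ^ 2)
    (fun t => (((((hy t).mul (h2 t)).add ((hz t).mul (h3 t))).add ((h1 t).const_mul B)).add
      (((h1 t).pow 2).const_mul (Q / 2))).congr_deriv (by ring)) τ σ

theorem gyroscopic_geometric_integral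
    (h1 : ∀ τ, HasDerivAt ν₁ (z τ * ν₂ τ - y τ * ν₃ τ) τ)
    (h2 : ∀ τ, HasDerivAt ν₂ (d₁ * y τ * ν₃ τ - z τ * ν₁ τ + A * ν₃ τ) τ)
    (h3 : ∀ τ, HasDerivAt ν₃ (-(d₁ * y τ * ν₂ τ) + y τ * ν₁ τ - A * ν₂ τ) τ) (τ σ : ℝ) :
    ν₁ τ ^ 2 + ν₂ τ ^ 2 + ν₃ τ ^ 2 = ν₁ σ ^ 2 + ν₂ σ ^ 2 + ν₃ σ ^ 2 :=
  is_const_of_hasDerivAt_zero (f := fun t => ν₁ t ^ 2 + ν₂ t ^ 2 + ν₃ t ^ 2)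
    (fun t => ((((h1 t).pow 2).add ((h2 t).pow 2)).add ((h3 t).pow 2)).congr_deriv
      (by ring)) τ σ

end GyroscopicIntegrals

/-- First integrals of the dimensionless Hess–Sretensky system with gyroscopic term. -/
theorem reduced_gyroscopic_integrals
    (d₁ A B Q : ℝ) (y z ν₁ ν₂ ν₃ : ℝ → ℝ)
    (hy : ∀ τ, HasDerivAt y (d₁ * y τ * z τ + (A - B) * z τ - Q * ν₁ τ * z τ + ν₃ τ) τ)
    (hz : ∀ τ, HasDerivAt z (-(d₁ * y τ ^ 2) - (A - B) * y τ + Q * ν₁ τ * y τ - ν₂ τ) τ)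
    (h1 : ∀ τ, HasDerivAt ν₁ (z τ * ν₂ τ - y τ * ν₃ τ) τ)
    (h2 : ∀ τ, HasDerivAt ν₂ (d₁ * y τ * ν₃ τ - z τ * ν₁ τ + A * ν₃ τ) τ)
    (h3 : ∀ τ, HasDerivAt ν₃ (-(d₁ * y τ * ν₂ τ) + y τ * ν₁ τ - A * ν₂ τ) τ) :
    (∀ τ, (y τ ^ 2 + z τ ^ 2) / 2 + ν₁ τ = (y 0 ^ 2 + z 0 ^ 2) / 2 + ν₁ 0)
    ∧ (∀ τ, y τ * ν₂ τ + z τ * ν₃ τ + B * ν₁ τ + Q / 2 * ν₁ τ ^ 2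
        = y 0 * ν₂ 0 + z 0 * ν₃ 0 + B * ν₁ 0 + Q / 2 * ν₁ 0 ^ 2)
    ∧ (∀ τ, ν₁ τ ^ 2 + ν₂ τ ^ 2 + ν₃ τ ^ 2 = ν₁ 0 ^ 2 + ν₂ 0 ^ 2 + ν₃ 0 ^ 2) :=
  ⟨fun τ => gyroscopic_energy_integral hy hz h1 τ 0,
    fun τ => gyroscopic_area_integral hy hz h1 h2 h3 τ 0,
    fun τ => gyroscopic_geometric_integral h1 h2 h3 τ 0⟩
end
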